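/- If N is a five-valued Nelson algebra, C a completely irreducible deductive system of N, and D a proper deductive system with C ⊊ D, then D is a maximal deductive system. -/
import Mathlib


/-- A Nelson algebra: a distributive lattice (axioms N1, N2) with a De Morgan
involution `tilde` (N3, N4), the Kleene condition (N5), and a weak implication
`imp` satisfying (N6)-(N8). -/
class NelsonAlgebra (N : Type*) extends DistribLattice N where
  one : N
  tilde : N → N
  imp : N → N → N
  tilde_tilde : ∀ x : N, tilde (tilde x) = x
  tilde_sup : ∀ x y : N, tilde (x ⊔ y) = tilde x ⊓ tilde y
  kleene : ∀ x y : N, x ⊓ tilde x = (x ⊓ tilde x) ⊓ (y ⊔ tilde y)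
  imp_self : ∀ x : N, imp x x = one
  imp_imp : ∀ x y z : N, imp x (imp y z) = imp (x ⊓ y) z
  inf_imp : ∀ x y : N, x ⊓ imp x y = x ⊓ (tilde x ⊔ y)

open NelsonAlgebra

/-- A deductive system: contains 1 and is closed under modus ponens. -/
def IsDeductiveSystem {N : Type*} [NelsonAlgebra N] (D : Set N) : Prop :=
  NelsonAlgebra.one ∈ D ∧ ∀ x y : N, x ∈ D → imp x y ∈ D → y ∈ D

/-- A completely irreducible deductive system: proper, and whenever it is an
intersection of a family of deductive systems it equals one of them. -/
def IsCompletelyIrreducibleDS {N : Type*} [NelsonAlgebra N] (D : Set N) : Prop :=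
  IsDeductiveSystem D ∧ D ≠ Set.univ ∧
    ∀ S : Set (Set N), (∀ D' ∈ S, IsDeductiveSystem D') → D = ⋂₀ S → D ∈ S

/-- A maximal deductive system. -/
def IsMaximalDS {N : Type*} [NelsonAlgebra N] (M : Set N) : Prop :=
  IsDeductiveSystem M ∧ M ≠ Set.univ ∧
    ∀ D : Set N, IsDeductiveSystem D → D ≠ Set.univ → M ⊆ D → M = D

section Auxiliary

variable {N : Type*} [NelsonAlgebra N]

private lemma nelson_tilde_inf (x y : N) : tilde (x ⊓ y) = tilde x ⊔ tilde y := by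
  have h := tilde_sup (tilde x) (tilde y)
  rw [tilde_tilde, tilde_tilde] at h
  rw [← h, tilde_tilde]

private lemma nelson_tilde_le_tilde {x y : N} (h : x ≤ y) : tilde y ≤ tilde x := by
  have hs : x ⊔ y = y := sup_eq_right.mpr h
  calc tilde y = tilde (x ⊔ y) := by rw [hs]
    _ = tilde x ⊓ tilde y := tilde_sup x y
    _ ≤ tilde x := inf_le_left

private lemma nelson_kleene_le (x y : N) : x ⊓ tilde x ≤ y ⊔ tilde y :=
  (kleene x y).le.trans inf_le_right

private lemma nelson_imp_one (x : N) : imp x (one : N) = one := by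
  conv_lhs => rw [← imp_self x]
  rw [imp_imp, inf_idem, NelsonAlgebra.imp_self]

/-- If `x ≤ ~x ⊔ y` then `imp x y = 1`. -/
private lemma nelson_imp_eq_one {x y : N} (h : x ≤ tilde x ⊔ y) : imp x y = one := by
  have h1 : x ⊓ imp x y = x := by rw [inf_imp]; exact inf_eq_left.mpr h
  have hx : x ≤ imp x y := inf_eq_left.mp h1
  calc imp x y = imp (imp x y ⊓ x) y := by rw [inf_eq_right.mpr hx]
    _ = imp (imp x y) (imp x y) := (imp_imp _ _ _).symm
    _ = one := imp_self _

/-- The K combinator. -/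
private lemma nelson_imp_K (x y : N) : imp x (imp y x) = one := by
  rw [imp_imp]
  exact nelson_imp_eq_one (le_trans inf_le_left le_sup_right)

/-- Purely lattice-theoretic auxiliary step. -/
private lemma nelson_aux_le {d p q z T : N} (hp : d ≤ p) (hq : d ≤ q)
    (hz : d ≤ z ⊔ tilde z) (hT : p ⊓ q ⊓ tilde z ≤ T) : d ≤ T ⊔ z := by
  calc d ≤ (p ⊓ q) ⊓ (z ⊔ tilde z) := le_inf (le_inf hp hq) hz
    _ = ((p ⊓ q) ⊓ z) ⊔ ((p ⊓ q) ⊓ tilde z) := inf_sup_left _ _ _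
    _ ≤ z ⊔ T := sup_le_sup inf_le_right hT
    _ ≤ T ⊔ z := (sup_comm _ _).le

/-- The S combinator. -/
private lemma nelson_imp_S (x y z : N) :
    imp (imp x (imp y z)) (imp (imp x y) (imp x z)) = one := by
  rw [imp_imp x y z, imp_imp (imp x y) x z, imp_imp (imp (x ⊓ y) z) (imp x y ⊓ x) z]
  apply nelson_imp_eq_one
  set A := imp (x ⊓ y) z with hA
  set B := imp x y with hB
  set w := x ⊓ y with hw
  set a := x ⊓ tilde x with ha
  set b := w ⊓ tilde w with hb
  have e1 : B ⊓ x = a ⊔ w := by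
    rw [inf_comm B x, hB, inf_imp, inf_sup_left, ← ha, ← hw]
  have e2 : w ⊓ A = b ⊔ (w ⊓ z) := by
    rw [inf_imp w z, inf_sup_left, ← hb]
  have hEle : A ⊓ (B ⊓ x) ≤ (a ⊔ b) ⊔ z := by
    rw [e1, inf_sup_left]
    apply sup_le
    · exact inf_le_right.trans (le_sup_left.trans le_sup_left)
    · rw [inf_comm A w, e2]
      apply sup_le
      · exact (le_sup_right.trans le_sup_left : b ≤ (a ⊔ b) ⊔ z)
      · exact inf_le_right.trans le_sup_right
  have hT : (tilde a ⊓ tilde b) ⊓ tilde z ≤ tilde (A ⊓ (B ⊓ x)) := by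
    have h2 := nelson_tilde_le_tilde hEle
    rwa [tilde_sup, tilde_sup] at h2
  have hta : tilde a = tilde x ⊔ x := by rw [ha, nelson_tilde_inf, tilde_tilde]
  have htb : tilde b = tilde w ⊔ w := by rw [hb, nelson_tilde_inf, tilde_tilde]
  have haT : a ≤ tilde (A ⊓ (B ⊓ x)) ⊔ z := by
    refine nelson_aux_le ?_ ?_ (nelson_kleene_le x z) hT
    · rw [hta]; exact inf_le_right.trans le_sup_left
    · rw [htb]; exact (nelson_kleene_le x w).trans (sup_comm w (tilde w)).le
  have hbT : b ≤ tilde (A ⊓ (B ⊓ x)) ⊔ z := by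
    refine nelson_aux_le ?_ ?_ (nelson_kleene_le w z) hT
    · rw [hta]; exact (nelson_kleene_le w x).trans (sup_comm x (tilde x)).le
    · rw [htb]; exact inf_le_right.trans le_sup_left
  exact hEle.trans (sup_le (sup_le haT hbT) le_sup_right)

/-- The deduction extension of a deductive system is a deductive system. -/
private lemma nelson_deduction_DS {F : Set N} (hF : IsDeductiveSystem F) (s : N) :
    IsDeductiveSystem {t | imp s t ∈ F} := by
  constructor
  · show imp s one ∈ F
    rw [nelson_imp_one]; exact hF.1
  · intro a b ha hab
    have h1 : imp (imp s a) (imp s b) ∈ F :=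
      hF.2 _ _ hab (by rw [nelson_imp_S s a b]; exact hF.1)
    exact hF.2 _ _ ha h1

end Auxiliary

theorem proper_above_ci_is_maximal {N : Type*} [NelsonAlgebra N]
    (h5 : ∀ x y z : N,
      imp (imp (imp x z) y) (imp (imp (imp y x) y) y) = NelsonAlgebra.one)
    (C D : Set N) (hC : IsCompletelyIrreducibleDS C)
    (hD : IsDeductiveSystem D) (hproper : D ≠ Set.univ) (hCD : C ⊂ D) :
    IsMaximalDS D := by
  classical
  -- Extract the bound `c` of the completely irreducible deductive system `C`.
  set S : Set (Set N) := {F | IsDeductiveSystem F ∧ C ⊂ F} with hS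
  have hCsubInter : C ⊆ ⋂₀ S := fun t ht =>
    Set.mem_sInter.mpr fun F hF => hF.2.subset ht
  have hne : C ≠ ⋂₀ S := by
    intro h
    have hmem := hC.2.2 S (fun F hF => hF.1) h
    exact ssubset_irrefl C hmem.2
  have hnotsub : ¬(⋂₀ S ⊆ C) := fun h => hne (Set.Subset.antisymm hCsubInter h)
  obtain ⟨c, hcI, hcn⟩ := Set.not_subset.mp hnotsub
  have hcall : ∀ F : Set N, IsDeductiveSystem F → C ⊂ F → c ∈ F :=
    fun F h1 h2 => Set.mem_sInter.mp hcI F ⟨h1, h2⟩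
  -- The key "bound" property: for any deductive system F ⊇ C and s ∉ F, imp s c ∈ F.
  have hG : ∀ F : Set N, IsDeductiveSystem F → C ⊆ F → ∀ s, s ∉ F → imp s c ∈ F := by
    intro F hF hCF s hs
    have hds := nelson_deduction_DS hF s
    have hsub1 : C ⊆ {t | imp s t ∈ F} := by
      intro t ht
      exact hF.2 t _ (hCF ht) (by rw [nelson_imp_K t s]; exact hF.1)
    have hsS : s ∈ {t | imp s t ∈ F} := by
      show imp s s ∈ F
      rw [NelsonAlgebra.imp_self]; exact hF.1
    have hsub : C ⊂ {t | imp s t ∈ F} :=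
      (Set.ssubset_iff_of_subset hsub1).mpr ⟨s, hsS, fun h => hs (hCF h)⟩
    exact hcall _ hds hsub
  have hCsubD : C ⊆ D := hCD.subset
  have hcD : c ∈ D := hcall D hD hCD
  -- Key lemma: anything outside D implies everything, modulo D.
  have key : ∀ y, y ∉ D → ∀ x, imp y x ∈ D := by
    intro y hy x
    by_contra hyx
    have T5 : imp (imp y x) c ∈ C :=
      hG C hC.1 subset_rfl _ (fun h => hyx (hCsubD h))
    have hcy : imp c y ∉ C := fun h => hy (hD.2 c y hcD (hCsubD h))
    have T3 : imp (imp c y) c ∈ C := hG C hC.1 subset_rfl _ hcy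
    have step1 : imp (imp (imp c y) c) c ∈ C :=
      hC.1.2 _ _ T5 (by rw [h5 y c x]; exact hC.1.1)
    exact hcn (hC.1.2 _ _ T3 step1)
  refine ⟨hD, hproper, ?_⟩
  intro E hE hEp hDE
  have hED : E ⊆ D := by
    intro y hyE
    by_contra hyD
    exact hEp (Set.eq_univ_of_forall fun x => hE.2 y x hyE (hDE (key y hyD x)))
  exact Set.Subset.antisymm hDE hED
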